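/- In the SRLOD model with learning rate α ∈ (0,1) and exploration rate ε ∈ (0,1) on a finite connected graph, the time evolution of the preference vector is ergodic: for any two states η, ζ ∈ S = {-1,1}^N and any time t0, there exists a finite k such that P(y_{t0+k} = ζ | y_{t0} = η) > 0. -/

import Mathlib

open MeasureTheory ProbabilityTheory

noncomputable section

/-- The preferred opinion of an agent with Q-values `q : Bool → ℝ` (`true` encodes
opinion `1`, `false` encodes opinion `-1`): the opinion with the larger Q-value
(opinion `1` in case of a tie). -/
def prefOf (q : Bool → ℝ) : Bool := if q false ≤ q true then true else false

/-- The real value of an opinion: `1` for `true`, `-1` for `false`. -/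
def opinVal (b : Bool) : ℝ := if b then 1 else -1

/-- One round of the SRLOD model: the two endpoints `i`, `j` of the selected edge each
express an opinion (the preferred one if the respective exploration flag `e1`, `e2` is
`false`, the other one if it is `true`), and both update the Q-value of their own
expressed opinion by `q ← (1−α)q + α·o_i·o_j`.  (If the sampled pair `(i,j)` is not an
edge of `G` — an event of probability zero — nothing happens.) -/
def srlodStep {N : ℕ} (G : SimpleGraph (Fin N)) [DecidableRel G.Adj] (α : ℝ)
    (q : Fin N → Bool → ℝ) (i j : Fin N) (e1 e2 : Bool) : Fin N → Bool → ℝ :=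
  if G.Adj i j then
    let oi : Bool := if e1 then !(prefOf (q i)) else prefOf (q i)
    let oj : Bool := if e2 then !(prefOf (q j)) else prefOf (q j)
    let R : ℝ := opinVal oi * opinVal oj
    fun v o =>
      if v = i ∧ o = oi then (1 - α) * q i oi + α * R
      else if v = j ∧ o = oj then (1 - α) * q j oj + α * R
      else q v o
  else q

/-!
Q-values stay in `[-1, 1]`. Choosing the edge `c — a` `n` times in a row with fixed expressed
opinions brings the two updated Q-values within `2 (1 - α) ^ n` of the reward `±1`. Two such
blocks polarize `c` towards `ζ c`, keep `a` polarized if it was, and touch nobody else. In a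
connected graph with an edge every vertex has a neighbour, so finitely many moves along edges
steer any state to any preference vector `ζ`. Each such move has positive probability, so by
independence a positive-probability prefix of moves realising `y_{t₀} = η`, followed by these
moves, is an event of positive probability inside `{y_{t₀} = η, y_{t₀ + k} = ζ}`.
-/

theorem SimpleGraph.Preconnected.exists_adj {V : Type*} {G : SimpleGraph V} (hG : G.Preconnected)
    {i j : V} (hij : G.Adj i j) (v : V) : ∃ a, G.Adj v a :=
  have := SimpleGraph.nontrivial_of_not_isIsolated hij.not_isIsolated_left
  SimpleGraph.exists_adj_iff_not_isIsolated.2 (hG.not_isIsolated v)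

namespace SRLOD

open Function

section ControlledSystem

variable {S β : Type*} (f : S → β → S)

def trajectory (x₀ : S) (u : ℕ → β) : ℕ → S
  | 0 => x₀
  | t + 1 => f (trajectory x₀ u t) (u t)

def ReachableVia (good : Set β) : S → S → Prop :=
  Relation.ReflTransGen fun x y => ∃ m ∈ good, f x m = y

variable {f}

theorem trajectory_congr {x₀ : S} {u u' : ℕ → β} {T : ℕ} (h : ∀ t < T, u t = u' t) :
    trajectory f x₀ u T = trajectory f x₀ u' T := by
  induction T with
  | zero => rfl
  | succ T ih =>
    simp only [trajectory]
    rw [ih fun t ht => h t (by omega), h T (by omega)]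

theorem ReachableVia.exists_trajectory_eq {good : Set β} {x₀ : S} {u : ℕ → β} {T : ℕ} {y : S}
    (h : ReachableVia f good (trajectory f x₀ u T) y) :
    ∃ (u' : ℕ → β) (k : ℕ), (∀ t < T, u' t = u t) ∧ (∀ t, T ≤ t → t < T + k → u' t ∈ good) ∧
      trajectory f x₀ u' (T + k) = y := by
  induction h with
  | refl => exact ⟨u, 0, fun _ _ => rfl, fun t h₁ h₂ => by omega, rfl⟩
  | tail _ hstep ih =>
    obtain ⟨u', k, hpre, hgood, hy⟩ := ih
    obtain ⟨m, hm, rfl⟩ := hstep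
    refine ⟨update u' (T + k) m, k + 1, fun t ht => ?_, fun t h₁ h₂ => ?_, ?_⟩
    · rw [update_of_ne (by omega)]
      exact hpre t ht
    · by_cases ht : t = T + k
      · rwa [ht, update_self]
      · rw [update_of_ne ht]
        exact hgood t h₁ (by omega)
    · rw [← add_assoc, trajectory, update_self,
        trajectory_congr fun t ht => update_of_ne (Nat.ne_of_lt ht) _ _, hy]

end ControlledSystem

section Probability

variable {Ω S β : Type*} [MeasurableSpace Ω] {P : Measure Ω}

theorem cond_pos_of_measure_inter_ne_zero [IsFiniteMeasure P] {s t : Set Ω}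
    (h : P (s ∩ t) ≠ 0) : 0 < P[t | s] := by
  rw [ProbabilityTheory.cond, Measure.smul_apply, smul_eq_mul]
  refine ENNReal.mul_pos (ENNReal.inv_ne_zero.2 (measure_ne_top P s)) fun h₀ => h ?_
  exact measure_mono_null (by rw [Set.inter_comm])
    (nonpos_iff_eq_zero.1 (h₀ ▸ Measure.le_restrict_apply s t))

theorem exists_measure_preimage_singleton_ne_zero [Countable β] (P : Measure Ω) [NeZero P]
    (X : Ω → β) : ∃ b, P (X ⁻¹' {b}) ≠ 0 := by
  by_contra! h
  exact Measure.measure_univ_ne_zero.2 (NeZero.ne P)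
    (measure_mono_null (fun ω _ => Set.mem_iUnion.2 ⟨X ω, rfl⟩) (measure_iUnion_null h))

theorem exists_mem_forall_measure_preimage_singleton_ne_zero [Countable β] (M : ℕ → Ω → β)
    {s : Set Ω} (hs : P s ≠ 0) : ∃ ω ∈ s, ∀ t, P (M t ⁻¹' {M t ω}) ≠ 0 := by
  have hnull : P {ω | ∃ t, P (M t ⁻¹' {M t ω}) = 0} = 0 := by
    have : {ω | ∃ t, P (M t ⁻¹' {M t ω}) = 0} =
        ⋃ t, ⋃ m ∈ {m | P (M t ⁻¹' {m}) = 0}, M t ⁻¹' {m} := by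
      ext ω
      simp
    rw [this]
    exact measure_iUnion_null fun t =>
      (measure_biUnion_null_iff (Set.to_countable _)).2 fun _ hm => hm
  obtain ⟨ω, hωs, hω⟩ := nonempty_of_measure_ne_zero (s := s \ _) <| by
    rwa [measure_sdiff_null hnull]
  exact ⟨ω, hωs, fun t h => hω ⟨t, h⟩⟩

theorem measure_iInter_preimage_singleton_ne_zero [MeasurableSpace β]
    [MeasurableSingletonClass β] {M : ℕ → Ω → β} (hM : iIndepFun M P) {u : ℕ → β} {T : ℕ}
    (hu : ∀ t < T, P (M t ⁻¹' {u t}) ≠ 0) : P (⋂ t ∈ Finset.range T, M t ⁻¹' {u t}) ≠ 0 := by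
  rw [iIndepFun_iff_measure_inter_preimage_eq_mul.1 hM _ fun t _ => measurableSet_singleton _]
  exact Finset.prod_ne_zero_iff.2 fun t ht => hu t (Finset.mem_range.1 ht)

theorem exists_measure_inter_ne_zero_of_reachableVia
    [MeasurableSpace β] [MeasurableSingletonClass β] [Countable β] {f : S → β → S} {good : Set β}
    {M : ℕ → Ω → β} (hM : iIndepFun M P) (hgood : ∀ t, ∀ m ∈ good, P (M t ⁻¹' {m}) ≠ 0)
    {X : ℕ → Ω → S} {x₀ : S} (hX₀ : ∀ ω, X 0 ω = x₀)
    (hX : ∀ t ω, X (t + 1) ω = f (X t ω) (M t ω)) {A B : Set S} {t₀ : ℕ}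
    (hA : P (X t₀ ⁻¹' A) ≠ 0)
    (hreach : ∀ ω, X t₀ ω ∈ A → ∃ y ∈ B, ReachableVia f good (X t₀ ω) y) :
    ∃ k, P (X t₀ ⁻¹' A ∩ X (t₀ + k) ⁻¹' B) ≠ 0 := by
  have hXtraj : ∀ t ω, X t ω = trajectory f x₀ (fun s => M s ω) t := by
    intro t ω
    induction t with
    | zero => exact hX₀ ω
    | succ t ih => rw [hX, ih]; rfl
  obtain ⟨ω₀, hω₀A, hω₀⟩ := exists_mem_forall_measure_preimage_singleton_ne_zero M hA
  obtain ⟨y, hyB, hy⟩ := hreach ω₀ hω₀A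
  rw [Set.mem_preimage, hXtraj] at hω₀A
  rw [hXtraj] at hy
  obtain ⟨u, k, hpre, hgood', rfl⟩ := hy.exists_trajectory_eq
  have hu : ∀ t < t₀ + k, P (M t ⁻¹' {u t}) ≠ 0 := by
    intro t ht
    by_cases ht₀ : t < t₀
    · rw [hpre t ht₀]
      exact hω₀ t
    · exact hgood t _ (hgood' t (by omega) ht)
  refine ⟨k, fun h₀ => measure_iInter_preimage_singleton_ne_zero hM hu (measure_mono_null ?_ h₀)⟩
  intro ω hω
  simp only [Set.mem_iInter, Finset.mem_range, Set.mem_preimage, Set.mem_singleton_iff] at hω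
  refine ⟨?_, ?_⟩
  · rw [Set.mem_preimage, hXtraj,
      trajectory_congr fun t ht => (hω t (by omega)).trans (hpre t ht)]
    exact hω₀A
  · rw [Set.mem_preimage, hXtraj, trajectory_congr hω]
    exact hyB

end Probability

section Opinions

variable {V : Type*}

theorem opinVal_mul_mem_Icc (a b : Bool) : opinVal a * opinVal b ∈ Set.Icc (-1 : ℝ) 1 := by
  cases a <;> cases b <;> norm_num [opinVal]

theorem opinVal_mul_self (o : Bool) : opinVal o * opinVal o = 1 := by
  cases o <;> norm_num [opinVal]

theorem opinVal_not_mul (o : Bool) : opinVal (!o) * opinVal o = -1 := by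
  cases o <;> norm_num [opinVal]

def QBounded (x : V → Bool → ℝ) : Prop := ∀ v o, x v o ∈ Set.Icc (-1 : ℝ) 1

def IsPolarized (δ : ℝ) (ζ : V → Bool) (x : V → Bool → ℝ) (v : V) : Prop :=
  1 - δ ≤ x v (ζ v) ∧ x v (!ζ v) ≤ -1 + δ

theorem IsPolarized.prefOf_eq {δ : ℝ} {ζ : V → Bool} {x : V → Bool → ℝ} {v : V} (hδ : δ < 1)
    (h : IsPolarized δ ζ x v) : prefOf (x v) = ζ v := by
  obtain ⟨h₁, h₂⟩ := h
  unfold prefOf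
  cases hv : ζ v <;> rw [hv] at h₁ h₂ <;> simp only [Bool.not_false, Bool.not_true] at h₂
  · rw [if_neg (by linarith)]
  · rw [if_pos (by linarith)]

end Opinions

section Interaction

variable {V : Type*} [DecidableEq V] {α : ℝ}

variable (α) in
/-- `srlodStep` along an edge, in terms of the expressed opinions instead of the exploration
flags (see `srlodStep_of_adj`). -/
def interact (x : V → Bool → ℝ) (i j : V) (oi oj : Bool) : V → Bool → ℝ :=
  fun v o => if v = i ∧ o = oi ∨ v = j ∧ o = oj then
    (1 - α) * x v o + α * (opinVal oi * opinVal oj) else x v o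

variable (α) in
theorem iterate_interact_apply (x : V → Bool → ℝ) (i j : V) (oi oj : Bool) (k : ℕ)
    (v : V) (o : Bool) :
    (fun y => interact α y i j oi oj)^[k] x v o =
      if v = i ∧ o = oi ∨ v = j ∧ o = oj then
        opinVal oi * opinVal oj + (1 - α) ^ k * (x v o - opinVal oi * opinVal oj)
      else x v o := by
  induction k with
  | zero => split_ifs <;> simp
  | succ k ih =>
    rw [iterate_succ_apply']
    simp only [interact, ih]
    split_ifs <;> ring

theorem QBounded.interact (hα : α ∈ Set.Icc (0 : ℝ) 1) {x : V → Bool → ℝ} (hx : QBounded x)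
    (i j : V) (oi oj : Bool) : QBounded (interact α x i j oi oj) := by
  intro v o
  unfold SRLOD.interact
  split_ifs
  · obtain ⟨hR₁, hR₂⟩ := opinVal_mul_mem_Icc oi oj
    obtain ⟨hx₁, hx₂⟩ := hx v o
    obtain ⟨hα₀, hα₁⟩ := hα
    constructor <;> nlinarith
  · exact hx v o

end Interaction

section Dynamics

variable {N : ℕ} {G : SimpleGraph (Fin N)} [DecidableRel G.Adj] {α : ℝ}

theorem srlodStep_of_adj {i j : Fin N} (h : G.Adj i j) (x : Fin N → Bool → ℝ) (e₁ e₂ : Bool) :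
    srlodStep G α x i j e₁ e₂ =
      interact α x i j (e₁ ^^ prefOf (x i)) (e₂ ^^ prefOf (x j)) := by
  have hxor : ∀ e p : Bool, (if e then !p else p) = (e ^^ p) := by decide
  funext v o
  simp only [srlodStep, h, if_true, interact, hxor]
  split_ifs <;> grind

theorem QBounded.srlodStep (hα : α ∈ Set.Icc (0 : ℝ) 1) {x : Fin N → Bool → ℝ}
    (hx : QBounded x) (i j : Fin N) (e₁ e₂ : Bool) : QBounded (srlodStep G α x i j e₁ e₂) := by
  by_cases h : G.Adj i j
  · rw [srlodStep_of_adj h]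
    exact hx.interact hα _ _ _ _
  · simpa [_root_.srlodStep, h] using hx

variable (G α) in
def move (x : Fin N → Bool → ℝ) (m : Fin N × Fin N × Bool × Bool) : Fin N → Bool → ℝ :=
  srlodStep G α x m.1 m.2.1 m.2.2.1 m.2.2.2

variable (G α) in
abbrev Reachable : (Fin N → Bool → ℝ) → (Fin N → Bool → ℝ) → Prop :=
  ReachableVia (move G α) {m | G.Adj m.1 m.2.1}

theorem QBounded.of_reachable (hα : α ∈ Set.Icc (0 : ℝ) 1) {x y : Fin N → Bool → ℝ}
    (hx : QBounded x) (h : Reachable G α x y) : QBounded y := by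
  induction h with
  | refl => exact hx
  | tail _ hstep ih =>
    obtain ⟨m, -, rfl⟩ := hstep
    exact ih.srlodStep hα _ _ _ _

theorem reachable_iterate_interact {i j : Fin N} (h : G.Adj i j) (x : Fin N → Bool → ℝ)
    (oi oj : Bool) (k : ℕ) : Reachable G α x ((fun y => interact α y i j oi oj)^[k] x) := by
  induction k with
  | zero => exact Relation.ReflTransGen.refl
  | succ k ih =>
    rw [iterate_succ_apply']
    set y := (fun y => interact α y i j oi oj)^[k] x
    refine ih.tail ⟨(i, j, oi ^^ prefOf (y i), oj ^^ prefOf (y j)), h, ?_⟩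
    rw [move, srlodStep_of_adj h]
    simp

theorem exists_reachable_isPolarized (hα : α ∈ Set.Ioo (0 : ℝ) 1) {c a : Fin N} (hca : G.Adj c a)
    {x : Fin N → Bool → ℝ} (hx : QBounded x) (ζ : Fin N → Bool) (n : ℕ) :
    ∃ y, Reachable G α x y ∧ IsPolarized (2 * (1 - α) ^ n) ζ y c ∧
      ∀ z, IsPolarized (2 * (1 - α) ^ n) ζ x z → IsPolarized (2 * (1 - α) ^ n) ζ y z := by
  have hp : 0 ≤ (1 - α) ^ n := pow_nonneg (by linarith [hα.2]) n
  have hne := hca.ne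
  -- In the second block `a`'s Q-value of `ζ c` is pushed towards
  -- `opinVal (ζ a) * opinVal (ζ c)`, i.e. towards `1` iff `ζ a = ζ c`: this keeps `a` polarized.
  set y := (fun y => interact α y c a (ζ a) (ζ c))^[n]
    ((fun y => interact α y c a (!ζ a) (ζ c))^[n] x)
  have hc : IsPolarized (2 * (1 - α) ^ n) ζ y c := by
    rcases Bool.eq_or_eq_not (ζ a) (ζ c) with hζ | hζ <;> constructor <;>
      simp [y, hζ, iterate_interact_apply, hne, opinVal_mul_self, opinVal_not_mul] <;>
      nlinarith [(hx c (ζ c)).1, (hx c !ζ c).2]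
  refine ⟨y, (reachable_iterate_interact hca x _ _ n).trans
    (reachable_iterate_interact hca _ _ _ n), hc, fun z hz => ?_⟩
  by_cases hzc : z = c
  · exact hzc ▸ hc
  by_cases hza : z = a
  · rw [hza] at hz ⊢
    obtain ⟨hz₁, hz₂⟩ := hz
    rcases Bool.eq_or_eq_not (ζ a) (ζ c) with hζ | hζ <;> rw [hζ] at hz₁ hz₂ <;> constructor <;>
      rw [hζ] <;>
      simp [y, hζ, iterate_interact_apply, hne.symm, opinVal_mul_self, opinVal_not_mul] <;>
      nlinarith [(hx a (ζ c)).1, (hx a (ζ c)).2, mul_nonneg hp hp]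
  · simpa [IsPolarized, y, iterate_interact_apply, hzc, hza] using hz

theorem exists_reachable_prefOf_eq (hα : α ∈ Set.Ioo (0 : ℝ) 1)
    (hadj : ∀ v, ∃ a, G.Adj v a) {x : Fin N → Bool → ℝ} (hx : QBounded x)
    (ζ : Fin N → Bool) : ∃ y, (fun v => prefOf (y v)) = ζ ∧ Reachable G α x y := by
  obtain ⟨n, hn⟩ := exists_pow_lt_of_lt_one (by norm_num : (0 : ℝ) < 1 / 2)
    (by linarith [hα.1] : 1 - α < 1)
  have hsets : ∀ s : Finset (Fin N),
      ∃ y, Reachable G α x y ∧ ∀ z ∈ s, IsPolarized (2 * (1 - α) ^ n) ζ y z := by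
    intro s
    induction s using Finset.induction_on with
    | empty => exact ⟨x, .refl, by simp⟩
    | insert v s _ ih =>
      obtain ⟨y, hxy, hy⟩ := ih
      obtain ⟨a, hva⟩ := hadj v
      obtain ⟨y', hyy', hv, hmono⟩ :=
        exists_reachable_isPolarized hα hva (hx.of_reachable (Set.Ioo_subset_Icc_self hα) hxy) ζ n
      refine ⟨y', hxy.trans hyy', ?_⟩
      simpa [hv] using fun z hz => hmono z (hy z hz)
  obtain ⟨y, hxy, hy⟩ := hsets Finset.univ
  exact ⟨y, funext fun v => (hy v (Finset.mem_univ v)).prefOf_eq (by linarith), hxy⟩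

theorem ofReal_edgeLaw_ne_zero_iff {ε : ℝ} (hε : ε ∈ Set.Ioo (0 : ℝ) 1) (i j : Fin N)
    (e₁ e₂ : Bool) :
    ENNReal.ofReal ((if G.Adj i j then 1 / (2 * (G.edgeFinset.card : ℝ)) else 0) *
      (if e₁ then ε else 1 - ε) * (if e₂ then ε else 1 - ε)) ≠ 0 ↔ G.Adj i j := by
  by_cases h : G.Adj i j
  · have : 0 < (G.edgeFinset.card : ℝ) := by
      exact_mod_cast Finset.card_pos.2 ⟨_, G.mem_edgeFinset.2 ((G.mem_edgeSet).2 h)⟩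
    simp only [h, if_true, ne_eq, ENNReal.ofReal_eq_zero, not_le, iff_true]
    obtain ⟨hε₀, hε₁⟩ := hε
    refine mul_pos (mul_pos (by positivity) ?_) ?_ <;> split_ifs <;> linarith
  · simp [h]

end Dynamics

end SRLOD

open SRLOD in
theorem stmt7_general {N : ℕ} (G : SimpleGraph (Fin N)) [DecidableRel G.Adj]
    (hG : G.Connected) (α ε : ℝ) (hα : α ∈ Set.Ioo (0 : ℝ) 1) (hε : ε ∈ Set.Ioo (0 : ℝ) 1)
    {Ω : Type*} [MeasurableSpace Ω] (P : Measure Ω) [IsProbabilityMeasure P]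
    (I J : ℕ → Ω → Fin N) (F1 F2 : ℕ → Ω → Bool)
    (hindep : iIndepFun
      (fun t ω => (I t ω, J t ω, F1 t ω, F2 t ω)) P)
    (hlaw : ∀ (t : ℕ) (i j : Fin N) (e1 e2 : Bool),
      P {ω | (I t ω, J t ω, F1 t ω, F2 t ω) = (i, j, e1, e2)} =
        ENNReal.ofReal ((if G.Adj i j then 1 / (2 * (G.edgeFinset.card : ℝ)) else 0) *
          (if e1 then ε else 1 - ε) * (if e2 then ε else 1 - ε)))
    (q : ℕ → Ω → Fin N → Bool → ℝ) (q0 : Fin N → Bool → ℝ)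
    (hq0 : ∀ ω, q 0 ω = q0) (hq0mem : ∀ i o, q0 i o ∈ Set.Icc (-1 : ℝ) 1)
    (hdyn : ∀ (t : ℕ) (ω : Ω),
      q (t + 1) ω = srlodStep G α (q t ω) (I t ω) (J t ω) (F1 t ω) (F2 t ω)) :
    ∀ (η ζ : Fin N → Bool) (t0 : ℕ),
      P {ω | (fun i => prefOf (q t0 ω i)) = η} ≠ 0 →
      ∃ k : ℕ, 0 < ProbabilityTheory.cond P {ω | (fun i => prefOf (q t0 ω i)) = η}
        {ω | (fun i => prefOf (q (t0 + k) ω i)) = ζ} := by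
  intro η ζ t0 hA
  set M : ℕ → Ω → Fin N × Fin N × Bool × Bool := fun t ω => (I t ω, J t ω, F1 t ω, F2 t ω)
  have hpos : ∀ t m, P (M t ⁻¹' {m}) ≠ 0 ↔ G.Adj m.1 m.2.1 := by
    rintro t ⟨i, j, e₁, e₂⟩
    exact (hlaw t i j e₁ e₂).symm ▸ ofReal_edgeLaw_ne_zero_iff hε i j e₁ e₂
  obtain ⟨m, hm⟩ := exists_measure_preimage_singleton_ne_zero P (M 0)
  have hbdd : ∀ t ω, QBounded (q t ω) := by
    intro t ω
    induction t with
    | zero => rw [hq0]; exact hq0mem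
    | succ t ih => rw [hdyn]; exact ih.srlodStep (Set.Ioo_subset_Icc_self hα) _ _ _ _
  obtain ⟨k, hk⟩ := exists_measure_inter_ne_zero_of_reachableVia (f := move G α)
    (good := {m | G.Adj m.1 m.2.1}) hindep (fun t m => (hpos t m).2) hq0 hdyn
    (A := {x | (fun i => prefOf (x i)) = η}) (B := {x | (fun i => prefOf (x i)) = ζ}) hA
    fun ω _ =>
      exists_reachable_prefOf_eq hα (hG.preconnected.exists_adj ((hpos 0 m).1 hm)) (hbdd t0 ω) ζ
  exact ⟨k, cond_pos_of_measure_inter_ne_zero hk⟩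

/-- In the SRLOD model with learning rate `α ∈ (0,1)` and exploration rate
`ε ∈ (0,1)` on a finite connected graph, the time evolution of the preference vector
`y_t = (i ↦ prefOf (q t · i))` is ergodic: for any two states `η, ζ ∈ {-1,1}^N` and any
time `t0` (such that the conditioning event `y_{t0} = η` is non-null), there exists a
finite `k` with `P(y_{t0+k} = ζ | y_{t0} = η) > 0`. -/
theorem stmt7 {N : ℕ} (hN : 0 < N) (G : SimpleGraph (Fin N)) [DecidableRel G.Adj]
    (hG : G.Connected) (α ε : ℝ) (hα : α ∈ Set.Ioo (0 : ℝ) 1) (hε : ε ∈ Set.Ioo (0 : ℝ) 1)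
    {Ω : Type*} [MeasurableSpace Ω] (P : Measure Ω) [IsProbabilityMeasure P]
    (I J : ℕ → Ω → Fin N) (F1 F2 : ℕ → Ω → Bool)
    (hmeas : ∀ t : ℕ, Measurable (fun ω => (I t ω, J t ω, F1 t ω, F2 t ω)))
    (hindep : iIndepFun
      (fun t ω => (I t ω, J t ω, F1 t ω, F2 t ω)) P)
    (hlaw : ∀ (t : ℕ) (i j : Fin N) (e1 e2 : Bool),
      P {ω | (I t ω, J t ω, F1 t ω, F2 t ω) = (i, j, e1, e2)} =
        ENNReal.ofReal ((if G.Adj i j then 1 / (2 * (G.edgeFinset.card : ℝ)) else 0) *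
          (if e1 then ε else 1 - ε) * (if e2 then ε else 1 - ε)))
    (q : ℕ → Ω → Fin N → Bool → ℝ) (q0 : Fin N → Bool → ℝ)
    (hq0 : ∀ ω, q 0 ω = q0) (hq0mem : ∀ i o, q0 i o ∈ Set.Icc (-1 : ℝ) 1)
    (hdyn : ∀ (t : ℕ) (ω : Ω),
      q (t + 1) ω = srlodStep G α (q t ω) (I t ω) (J t ω) (F1 t ω) (F2 t ω)) :
    ∀ (η ζ : Fin N → Bool) (t0 : ℕ),
      P {ω | (fun i => prefOf (q t0 ω i)) = η} ≠ 0 →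
      ∃ k : ℕ, 0 < ProbabilityTheory.cond P {ω | (fun i => prefOf (q t0 ω i)) = η}
        {ω | (fun i => prefOf (q (t0 + k) ω i)) = ζ} :=
  stmt7_general G hG α ε hα hε P I J F1 F2 hindep hlaw q q0 hq0 hq0mem hdyn

end
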